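/- arXiv:2207.11811 — 3 statements merged into one kernel-verified Lean document; each statement's English description precedes it below -/
import Mathlib

section
/- The 3-uniform hypergraph based on the cycle C_4 is metric. -/
universe u

/-- A function `d` is a metric (distance function) on `α`. -/
structure IsMetric {α : Type*} (d : α → α → ℝ) : Prop where
  eq_iff : ∀ x y, d x y = 0 ↔ x = y
  symm : ∀ x y, d x y = d y x
  triangle : ∀ x y z, d x z ≤ d x y + d y z

/-- `[u v w]`: the points are pairwise distinct and `v` lies between `u` and `w`. -/
def MBtw {α : Type*} (d : α → α → ℝ) (u v w : α) : Prop :=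
  u ≠ v ∧ u ≠ w ∧ v ≠ w ∧ d u v + d v w = d u w

/-- The hyperedge set `E_M` associated with a metric space: all triples
`{x,y,z}` such that one of the three points is between the other two. -/
def metricEdges {α : Type*} (d : α → α → ℝ) : Set (Set α) :=
  {s | ∃ u v w : α, s = {u, v, w} ∧ MBtw d u v w}

/-- A 3-uniform hypergraph (given by its hyperedge set on vertex type `V`)
is metric if there is a metric space on ground set `V` with `E = E_M`. -/
def IsMetricHypergraph {V : Type*} (E : Set (Set V)) : Prop :=
  ∃ d : V → V → ℝ, IsMetric d ∧ E = metricEdges d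

/-- The hypergraph based on a graph `G`: the vertex set is `V ∪ {x}` (here
`Option V`, with `none` playing the role of the extra point `x`); the
hyperedges are all three-point subsets of `V` together with all sets
`{x,u,v}` with `{u,v}` an edge of `G`. -/
def basedOn {V : Type*} (G : SimpleGraph V) : Set (Set (Option V)) :=
  {s | (∃ u v w : V, u ≠ v ∧ u ≠ w ∧ v ≠ w ∧ s = {some u, some v, some w}) ∨
       (∃ u v : V, G.Adj u v ∧ s = {none, some u, some v})}

/-- The hyperedge set of the subhypergraph induced on `U`. -/
def inducedEdges {V : Type*} (E : Set (Set V)) (U : Set V) : Set (Set U) :=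
  {s | Subtype.val '' s ∈ E}

/-- The line `L_M(xy)` determined by two points of a metric space. -/
def lineOf {α : Type*} (d : α → α → ℝ) (x y : α) : Set α :=
  {x, y} ∪ {z | ({x, y, z} : Set α) ∈ metricEdges d}

/-- `e` is a two-point set forming an edge of `G`. -/
def IsEdgePair {V : Type*} (G : SimpleGraph V) (e : Set V) : Prop :=
  ∃ u v : V, G.Adj u v ∧ e = {u, v}

/-- The equivalence relation `≡_G`: two pairs are equivalent iff both are
edges of `G` or both are non-edges of `G`. -/
def graphEquiv {V : Type*} (G : SimpleGraph V) (e f : Set V) : Prop :=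
  (IsEdgePair G e ∧ IsEdgePair G f) ∨ (¬ IsEdgePair G e ∧ ¬ IsEdgePair G f)

/-- A relation `r` on two-point subsets of `V` is an obstacle if no metric
space on a superset `W` of `V` has `L_M(ab) = L_M(cd) ↔ {a,b} r {c,d}`
for all two-point subsets `{a,b}`, `{c,d}` of `V`. -/
def IsObstacle {V : Type u} (r : Set V → Set V → Prop) : Prop :=
  ¬ ∃ (W : Type u) (f : V ↪ W) (d : W → W → ℝ), IsMetric d ∧
      ∀ a b c e : V, a ≠ b → c ≠ e →
        (lineOf d (f a) (f b) = lineOf d (f c) (f e) ↔ r {a, b} {c, e})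

/-- The restriction of a relation on two-point subsets of `V` to the
two-point subsets of `U ⊆ V`. -/
def restrictRel {V : Type*} (r : Set V → Set V → Prop) (U : Set V) :
    Set U → Set U → Prop :=
  fun e f => r (Subtype.val '' e) (Subtype.val '' f)

/-
Give the cycle its path metric (adjacent vertices at distance 1, antipodal ones at distance 2)
and put the apex `x` at distance 2 from the even vertices and 3 from the odd ones. Any three
cycle vertices contain an antipodal pair with the third vertex between them. An edge joins an
even vertex `u` to an odd vertex `v`, and `2 + 1 = 3` puts `u` between `x` and `v`. An antipodal
pair is equidistant from `x` and at distance `2 < 4` from each other, so none of its three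
points lies between the other two. Integer distances turn all of this into a finite check.
-/

section Triples

variable {α : Type*}

lemma setOf_triples_subset {P Q : α → α → α → Prop}
    (h : ∀ a b c, P a b c →
      Q a b c ∨ Q a c b ∨ Q b a c ∨ Q b c a ∨ Q c a b ∨ Q c b a) :
    {s : Set α | ∃ a b c, s = {a, b, c} ∧ P a b c} ⊆
      {s | ∃ a b c, s = {a, b, c} ∧ Q a b c} := by
  rintro _ ⟨a, b, c, rfl, hP⟩
  rcases h a b c hP with hQ | hQ | hQ | hQ | hQ | hQ
  · exact ⟨a, b, c, rfl, hQ⟩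
  · exact ⟨a, c, b, by rw [Set.pair_comm], hQ⟩
  · exact ⟨b, a, c, Set.insert_comm .., hQ⟩
  · exact ⟨b, c, a, by rw [Set.insert_comm, Set.pair_comm], hQ⟩
  · exact ⟨c, a, b, by rw [Set.pair_comm, Set.insert_comm], hQ⟩
  · exact ⟨c, b, a, by rw [Set.pair_comm, Set.insert_comm, Set.pair_comm], hQ⟩

end Triples

section NatMetric

variable {α : Type*} (D : α → α → ℕ)

lemma isMetric_natCast (h0 : ∀ x y, D x y = 0 ↔ x = y) (hsymm : ∀ x y, D x y = D y x)
    (htri : ∀ x y z, D x z ≤ D x y + D y z) : IsMetric fun x y => (D x y : ℝ) where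
  eq_iff x y := by simpa using h0 x y
  symm x y := by simp [hsymm x y]
  triangle x y z := by exact_mod_cast htri x y z

lemma metricEdges_natCast :
    metricEdges (fun x y => (D x y : ℝ)) =
      {s | ∃ u v w, s = {u, v, w} ∧ u ≠ v ∧ u ≠ w ∧ v ≠ w ∧ D u v + D v w = D u w} := by
  simp only [metricEdges, MBtw]
  norm_cast

end NatMetric

section BasedOn

variable {V : Type*} (G : SimpleGraph V)

def IsBasedTriple : Option V → Option V → Option V → Prop
  | some u, some v, some w => u ≠ v ∧ u ≠ w ∧ v ≠ w
  | none, some u, some v => G.Adj u v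
  | _, _, _ => False

instance [DecidableEq V] [DecidableRel G.Adj] :
    ∀ a b c, Decidable (IsBasedTriple G a b c)
  | some u, some v, some w => inferInstanceAs (Decidable (u ≠ v ∧ u ≠ w ∧ v ≠ w))
  | none, some u, some v => inferInstanceAs (Decidable (G.Adj u v))
  | none, none, _ | none, some _, none | some _, none, _ | some _, some _, none =>
      inferInstanceAs (Decidable False)

lemma basedOn_eq_setOf_isBasedTriple :
    basedOn G = {s | ∃ a b c, s = {a, b, c} ∧ IsBasedTriple G a b c} := by
  ext s
  constructor
  · rintro (⟨u, v, w, huv, huw, hvw, rfl⟩ | ⟨u, v, huv, rfl⟩)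
    · exact ⟨some u, some v, some w, rfl, huv, huw, hvw⟩
    · exact ⟨none, some u, some v, rfl, huv⟩
  · rintro ⟨(_ | u), (_ | v), (_ | w), rfl, h⟩ <;> simp only [IsBasedTriple] at h
    · exact .inr ⟨v, w, h, rfl⟩
    · exact .inl ⟨u, v, w, h.1, h.2.1, h.2.2, rfl⟩

end BasedOn

def c4ApexDist : Option (Fin 4) → Option (Fin 4) → ℕ
  | none, none => 0
  | none, some i | some i, none => 2 + i.val % 2
  | some i, some j => min (i - j).val (j - i).val

lemma isMetric_c4ApexDist : IsMetric fun x y => (c4ApexDist x y : ℝ) :=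
  isMetric_natCast _ (by decide) (by decide) (by decide)

/-- The hypergraph based on the cycle `C_4` is metric. -/
theorem stmt_15 : IsMetricHypergraph (basedOn (SimpleGraph.cycleGraph 4)) := by
  refine ⟨_, isMetric_c4ApexDist, ?_⟩
  rw [basedOn_eq_setOf_isBasedTriple, metricEdges_natCast]
  exact (setOf_triples_subset (by decide)).antisymm (setOf_triples_subset (by decide))
end

section
/- For every integer m ≥ 1, the 3-uniform hypergraph based on the path P_m on m vertices is metric. -/
universe u

/-! The extra point `x` sits at distance `m + (i mod 2)` from the `i`-th vertex of the path, so it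
is never between two path vertices (they are less than `m` apart), and it is collinear with two path
vertices `i`, `j` exactly when `|i - j|` equals the difference of their parities, i.e. when they are
consecutive. -/

section Extension

variable {V : Type*}

def extendMetric (d : V → V → ℝ) (r : V → ℝ) : Option V → Option V → ℝ
  | none, none => 0
  | none, some v => r v
  | some u, none => r u
  | some u, some v => d u v

variable {d : V → V → ℝ} {r : V → ℝ}

theorem isMetric_extendMetric (hd : IsMetric d) (hr : ∀ v, 0 < r v)
    (hr_le : ∀ u v, r u ≤ d u v + r v) (hd_le : ∀ u v, d u v ≤ r u + r v) :
    IsMetric (extendMetric d r) where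
  eq_iff := by
    rintro (_ | u) (_ | v) <;> simp [extendMetric, (hr _).ne', hd.eq_iff]
  symm := by
    rintro (_ | u) (_ | v) <;> simp [extendMetric, hd.symm]
  triangle := by
    rintro (_ | u) (_ | v) (_ | w) <;> simp only [extendMetric]
    · simp
    · simp
    · linarith [hr v]
    · linarith [hr_le w v, hd.symm v w]
    · simp
    · exact hd_le u w
    · exact hr_le u v
    · exact hd.triangle u v w

theorem some_mem_metricEdges_extendMetric {u v w : V} (h : {u, v, w} ∈ metricEdges d) :
    {some u, some v, some w} ∈ metricEdges (extendMetric d r) := by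
  obtain ⟨a, b, c, hs, hne_ab, hne_ac, hne_bc, hsum⟩ := h
  refine ⟨some a, some b, some c, ?_, by simpa, by simpa, by simpa, hsum⟩
  simpa [Set.image_insert_eq] using congrArg (Set.image some) hs

theorem none_mem_metricEdges_extendMetric {u v : V} (huv : u ≠ v) (h : r u + d u v = r v) :
    {none, some u, some v} ∈ metricEdges (extendMetric d r) :=
  ⟨none, some u, some v, rfl, by simp, by simp, by simpa, h⟩

theorem mem_metricEdges_extendMetric (hd : IsMetric d) {s : Set (Option V)}
    (hs : s ∈ metricEdges (extendMetric d r)) :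
    (∃ u v w : V, u ≠ v ∧ u ≠ w ∧ v ≠ w ∧ s = {some u, some v, some w}) ∨
      ∃ u v : V, u ≠ v ∧ (r u + d u v = r v ∨ r u + r v = d u v) ∧ s = {none, some u, some v} := by
  obtain ⟨_ | u, _ | v, _ | w, rfl, huv, huw, hvw, hsum⟩ := hs
  · exact absurd rfl huv
  · exact absurd rfl huv
  · exact absurd rfl huw
  · exact Or.inr ⟨v, w, by simpa using hvw, Or.inl hsum, rfl⟩
  · exact absurd rfl hvw
  · exact Or.inr ⟨u, w, by simpa using huw, Or.inr hsum, by rw [Set.insert_comm]⟩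
  · refine Or.inr ⟨v, u, by simpa using huv.symm, Or.inl ?_, ?_⟩
    · simp only [extendMetric] at hsum
      linarith [hd.symm u v]
    · rw [Set.insert_comm, Set.pair_comm, Set.insert_comm]
  · exact Or.inl ⟨u, v, w, by simpa using huv, by simpa using huw, by simpa using hvw, rfl⟩

end Extension

theorem triple_mem_metricEdges_of_dist_add {α : Type*} [LinearOrder α] {d : α → α → ℝ}
    (hd : ∀ a b c, a < b → b < c → d a b + d b c = d a c) {u v w : α}
    (huv : u ≠ v) (huw : u ≠ w) (hvw : v ≠ w) : {u, v, w} ∈ metricEdges d := by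
  have btw : ∀ a b c, a < b → b < c → MBtw d a b c := fun a b c hab hbc =>
    ⟨hab.ne, (hab.trans hbc).ne, hbc.ne, hd a b c hab hbc⟩
  wlog hlt : u < v generalizing u v
  · rw [Set.insert_comm]
    exact this huv.symm hvw huw (huv.lt_or_gt.resolve_left hlt)
  rcases hvw.lt_or_gt with hvw | hwv
  · exact ⟨u, v, w, rfl, btw u v w hlt hvw⟩
  rcases huw.lt_or_gt with huw | hwu
  · exact ⟨u, w, v, by rw [Set.pair_comm], btw u w v huw hwv⟩
  · exact ⟨w, u, v, by rw [Set.pair_comm, Set.insert_comm], btw w u v hwu hlt⟩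

section Path

variable {m : ℕ}

noncomputable def pathDist (m : ℕ) (i j : Fin m) : ℝ :=
  dist (i : ℕ) (j : ℕ)

def pathApexDist (m : ℕ) (i : Fin m) : ℝ :=
  m + (i % 2 : ℕ)

theorem isMetric_pathDist : IsMetric (pathDist m) where
  eq_iff _ _ := dist_eq_zero.trans Fin.val_inj
  symm _ _ := dist_comm _ _
  triangle _ _ _ := dist_triangle _ _ _

theorem pathDist_add_pathDist {a b c : Fin m} (hab : a < b) (hbc : b < c) :
    pathDist m a b + pathDist m b c = pathDist m a c := by
  have hab' : (a : ℝ) < b := mod_cast hab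
  have hbc' : (b : ℝ) < c := mod_cast hbc
  simp only [pathDist, Nat.dist_eq]
  rw [abs_of_neg (by linarith), abs_of_neg (by linarith), abs_of_neg (by linarith)]
  ring

theorem pathDist_lt (i j : Fin m) : pathDist m i j < m := by
  have hi : (i : ℝ) < m := mod_cast i.isLt
  have hj : (j : ℝ) < m := mod_cast j.isLt
  rw [pathDist, Nat.dist_eq, abs_sub_lt_iff]
  constructor <;> linarith [(i : ℕ).cast_nonneg (α := ℝ), (j : ℕ).cast_nonneg (α := ℝ)]

theorem one_le_pathDist {i j : Fin m} (h : i ≠ j) : 1 ≤ pathDist m i j :=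
  Nat.pairwise_one_le_dist (Fin.val_injective.ne h)

theorem pathDist_eq_one_iff {i j : Fin m} :
    pathDist m i j = 1 ↔ (SimpleGraph.pathGraph m).Adj i j := by
  rw [SimpleGraph.pathGraph_adj, pathDist, Nat.dist_eq, abs_eq zero_le_one]
  constructor
  · rintro (h | h)
    · right; exact_mod_cast (by linarith : (j : ℝ) + 1 = i)
    · left; exact_mod_cast (by linarith : (i : ℝ) + 1 = j)
  · rintro (h | h)
    · right; rw [← h]; push_cast; ring
    · left; rw [← h]; push_cast; ring

theorem cast_mod_two_le_one (n : ℕ) : ((n % 2 : ℕ) : ℝ) ≤ 1 :=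
  mod_cast Nat.le_of_lt_succ (Nat.mod_lt _ two_pos)

theorem isMetric_pathMetric (hm : 1 ≤ m) :
    IsMetric (extendMetric (pathDist m) (pathApexDist m)) := by
  have hm' : (1 : ℝ) ≤ m := mod_cast hm
  refine isMetric_extendMetric isMetric_pathDist (fun v => ?_) (fun u v => ?_) (fun u v => ?_)
  · unfold pathApexDist; positivity
  · rcases eq_or_ne u v with rfl | huv
    · simp [pathDist]
    · unfold pathApexDist
      linarith [one_le_pathDist huv, cast_mod_two_le_one u, (v % 2 : ℕ).cast_nonneg (α := ℝ)]
  · unfold pathApexDist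
    linarith [pathDist_lt u v, (u % 2 : ℕ).cast_nonneg (α := ℝ), (v % 2 : ℕ).cast_nonneg (α := ℝ)]

theorem pathGraph_adj_of_apex {u v : Fin m} (huv : u ≠ v)
    (h : pathApexDist m u + pathDist m u v = pathApexDist m v ∨
      pathApexDist m u + pathApexDist m v = pathDist m u v) :
    (SimpleGraph.pathGraph m).Adj u v := by
  have hu := (u % 2 : ℕ).cast_nonneg (α := ℝ)
  have hv := (v % 2 : ℕ).cast_nonneg (α := ℝ)
  unfold pathApexDist at h
  rcases h with h | h
  · rw [← pathDist_eq_one_iff]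
    linarith [one_le_pathDist huv, cast_mod_two_le_one v]
  · linarith [pathDist_lt u v, m.cast_nonneg (α := ℝ)]

theorem apex_of_pathGraph_adj {u v : Fin m} (h : (SimpleGraph.pathGraph m).Adj u v) :
    pathApexDist m u + pathDist m u v = pathApexDist m v ∨
      pathApexDist m v + pathDist m v u = pathApexDist m u := by
  have hd : pathDist m u v = 1 := pathDist_eq_one_iff.2 h
  rw [isMetric_pathDist.symm v u, hd]
  unfold pathApexDist
  rw [SimpleGraph.pathGraph_adj] at h
  rcases Nat.mod_two_eq_zero_or_one u with hu | hu <;>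
    [left; right] <;> (push_cast [hu, show (v : ℕ) % 2 = 1 - (u : ℕ) % 2 by omega]; ring)

end Path

/-- For every `m ≥ 1`, the hypergraph based on the path `P_m` is metric. -/
theorem stmt_16 (m : ℕ) (hm : 1 ≤ m) :
    IsMetricHypergraph (basedOn (SimpleGraph.pathGraph m)) := by
  refine ⟨extendMetric (pathDist m) (pathApexDist m), isMetric_pathMetric hm,
    Set.Subset.antisymm ?_ ?_⟩
  · rintro s (⟨u, v, w, huv, huw, hvw, rfl⟩ | ⟨u, v, hadj, rfl⟩)
    · exact some_mem_metricEdges_extendMetric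
        (triple_mem_metricEdges_of_dist_add (fun _ _ _ => pathDist_add_pathDist) huv huw hvw)
    · rcases apex_of_pathGraph_adj hadj with h | h
      · exact none_mem_metricEdges_extendMetric hadj.ne h
      · rw [Set.pair_comm]
        exact none_mem_metricEdges_extendMetric hadj.ne.symm h
  · intro s hs
    rcases mem_metricEdges_extendMetric isMetric_pathDist hs with h | ⟨u, v, huv, h, rfl⟩
    · exact Or.inl h
    · exact Or.inr ⟨u, v, pathGraph_adj_of_apex huv h, rfl⟩
end

section
/- There exist infinitely many pairwise non-isomorphic minimal non-metric 3-uniform hypergraphs; in particular, for every even integer n greater than four there is a minimal non-metric 3-uniform hypergraph on n+1 vertices. -/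
universe u

/-!
The hypergraph in question is the one based on the cycle `C_n` (`n` even, `n ≥ 6`): all triples
of cycle vertices, and `{x, u, v}` for the edges `uv` of the cycle.

It is not metric. All triples of cycle vertices being collinear, these `n ≥ 5` points lie
isometrically on a line, at positions `p_i`. With `y_i` the distance to the apex `x` and the points
sorted along the line, `H = y - p` is antitone, `K = y + p` is monotone, and `x` is collinear with
`i < j` iff `H_i = H_j`, `K_i = K_j` or `K_i + H_j = 0`. Triangle-freeness and degree two force
the cycle to be `0, 1, …, n-1` with edges alternating between the `H`- and the `K`-type, which an
even `n` makes impossible.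

It is minimal: without the apex the points lie on a line; without a cycle vertex the rest of the
cycle is a path, realised on the integers with the apex at distance `n` or `n + 1` according to
parity.
-/

open Function SimpleGraph

namespace IsMetric

variable {α β : Type*} {d : α → α → ℝ}

lemma dist_self (hd : IsMetric d) (x : α) : d x x = 0 := (hd.eq_iff x x).2 rfl

lemma nonneg (hd : IsMetric d) (x y : α) : 0 ≤ d x y := by
  linarith [hd.triangle x y x, hd.symm x y, hd.dist_self x]

lemma comp (hd : IsMetric d) {f : β → α} (hf : Injective f) :
    IsMetric fun a b => d (f a) (f b) where
  eq_iff _ _ := (hd.eq_iff _ _).trans hf.eq_iff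
  symm _ _ := hd.symm _ _
  triangle _ _ _ := hd.triangle _ _ _

end IsMetric

section MetricEdges

variable {α β : Type*} {d : α → α → ℝ}

lemma insert_mem_metricEdges_iff (hd : IsMetric d) {u v w : α}
    (huv : u ≠ v) (huw : u ≠ w) (hvw : v ≠ w) :
    ({u, v, w} : Set α) ∈ metricEdges d ↔
      d u v + d v w = d u w ∨ d v u + d u w = d v w ∨ d u w + d w v = d u v := by
  constructor
  · rintro ⟨p, q, r, hs, hpq, hpr, hqr, h⟩
    have hp : p ∈ ({u, v, w} : Set α) := hs ▸ by simp
    have hq : q ∈ ({u, v, w} : Set α) := hs ▸ by simp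
    have hr : r ∈ ({u, v, w} : Set α) := hs ▸ by simp
    simp only [Set.mem_insert_iff, Set.mem_singleton_iff] at hp hq hr
    have := hd.symm u v; have := hd.symm u w; have := hd.symm v w
    rcases hp with rfl | rfl | rfl <;> rcases hq with rfl | rfl | rfl <;>
      rcases hr with rfl | rfl | rfl <;> try exact absurd rfl ‹_ ≠ _›
    all_goals first
      | (left; linarith)
      | (right; left; linarith)
      | (right; right; linarith)
  · rintro (h | h | h)
    · exact ⟨u, v, w, rfl, huv, huw, hvw, h⟩
    · exact ⟨v, u, w, Set.insert_comm _ _ _, huv.symm, hvw, huw, h⟩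
    · exact ⟨u, w, v, by rw [Set.pair_comm], huw, huv, hvw.symm, h⟩

lemma mem_metricEdges_comp_iff {f : β → α} (hf : Injective f) {s : Set β} :
    s ∈ metricEdges (fun a b => d (f a) (f b)) ↔ f '' s ∈ metricEdges d := by
  constructor
  · rintro ⟨u, v, w, rfl, huv, huw, hvw, h⟩
    exact ⟨f u, f v, f w, by simp [Set.image_insert_eq], hf.ne huv, hf.ne huw, hf.ne hvw, h⟩
  · rintro ⟨a, b, c, hs, hab, hac, hbc, h⟩
    obtain ⟨u, -, rfl⟩ : a ∈ f '' s := hs ▸ by simp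
    obtain ⟨v, -, rfl⟩ : b ∈ f '' s := hs ▸ by simp
    obtain ⟨w, -, rfl⟩ : c ∈ f '' s := hs ▸ by simp
    refine ⟨u, v, w, Set.image_injective.2 hf ?_, ne_of_apply_ne f hab, ne_of_apply_ne f hac,
      ne_of_apply_ne f hbc, h⟩
    simp [hs, Set.image_insert_eq]

lemma isMetricHypergraph_inducedEdges_of_agree {E : Set (Set α)} {U : Set α} (hd : IsMetric d)
    (h : ∀ s ⊆ U, s ∈ E ↔ s ∈ metricEdges d) : IsMetricHypergraph (inducedEdges E U) :=
  ⟨fun a b => d a b, hd.comp Subtype.val_injective, Set.ext fun t =>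
    (h _ (Subtype.coe_image_subset U t)).trans
      (mem_metricEdges_comp_iff Subtype.val_injective).symm⟩

end MetricEdges

/-! ### Metric spaces in which every triple is collinear -/

lemma eq_zero_or_eq_add_of_abs_sub_add_abs_sub {a b x : ℝ} (ha : 0 < a) (hb : 0 < b)
    (h : |a - x| + |x - b| = a + b) : x = 0 ∨ x = a + b := by
  rcases abs_cases (a - x) with ⟨h1, -⟩ | ⟨h1, -⟩ <;>
    rcases abs_cases (x - b) with ⟨h2, -⟩ | ⟨h2, -⟩ <;> rw [h1, h2] at h
  · linarith
  · exact Or.inl (by linarith)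
  · exact Or.inr (by linarith)
  · linarith

section LineEmbedding

variable {α : Type*} {d : α → α → ℝ}

lemma dist_eq_abs_sub_or_eq_add (hd : IsMetric d)
    (hcol : ∀ u v w, u ≠ v → u ≠ w → v ≠ w → ({u, v, w} : Set α) ∈ metricEdges d)
    (a u v : α) : d u v = |d a u - d a v| ∨ d u v = d a u + d a v := by
  by_cases huv : u = v
  · simp [huv, hd.dist_self]
  by_cases hua : u = a
  · simp [hua, hd.dist_self, abs_of_nonneg (hd.nonneg a v)]
  by_cases hva : v = a
  · simp [hva, hd.dist_self, abs_of_nonneg (hd.nonneg a u), hd.symm u a]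
  rcases (insert_mem_metricEdges_iff hd (Ne.symm hua) (Ne.symm hva) huv).1
    (hcol a u v (Ne.symm hua) (Ne.symm hva) huv) with h | h | h
  · left; rw [abs_of_nonpos (by linarith [hd.nonneg u v])]; linarith
  · right; linarith [hd.symm u a]
  · left; rw [abs_of_nonneg (by linarith [hd.nonneg v u])]; linarith [hd.symm u v]

variable (hd : IsMetric d)
  (hcol : ∀ u v w, u ≠ v → u ≠ w → v ≠ w → ({u, v, w} : Set α) ∈ metricEdges d)
  {a b : α} (hmax : ∀ u v, d u v ≤ d a b)
include hd hcol hmax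

lemma dist_add_dist_eq_of_forall_le (u : α) : d a u + d u b = d a b := by
  rcases dist_eq_abs_sub_or_eq_add hd hcol a u b with h | h
  · rw [h, abs_of_nonpos (by linarith [hmax a u])]; ring
  · linarith [hmax u b, hd.nonneg a u]

lemma dist_eq_abs_sub_or_antipodal (u v : α) :
    d u v = |d a u - d a v| ∨ (d a u + d a v = d a b ∧ d u v = d a b) := by
  have hb : ∀ x, d b x = d a b - d a x := fun x => by
    linarith [dist_add_dist_eq_of_forall_le hd hcol hmax x, hd.symm x b]
  rcases dist_eq_abs_sub_or_eq_add hd hcol a u v with h | h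
  · exact Or.inl h
  rcases dist_eq_abs_sub_or_eq_add hd hcol b u v with h' | h'
  · left
    rw [h', hb, hb, show d a b - d a u - (d a b - d a v) = -(d a u - d a v) by ring, abs_neg]
  · right; rw [hb, hb] at h'; constructor <;> linarith

lemma eq_or_eq_or_eq_or_eq_of_ne_abs_sub {p q : α} (hpq : d p q ≠ |d a p - d a q|) (w : α) :
    w = a ∨ w = b ∨ w = p ∨ w = q := by
  have key := dist_eq_abs_sub_or_antipodal hd hcol hmax
  have hA := dist_add_dist_eq_of_forall_le hd hcol hmax
  obtain ⟨hsum, hpqD⟩ := (key p q).resolve_left hpq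
  have hp0 : 0 < d a p := by
    refine (hd.nonneg a p).lt_of_ne fun h => hpq ?_
    rw [← h, zero_sub, abs_neg, abs_of_nonneg (hd.nonneg a q)]; linarith
  have hq0 : 0 < d a q := by
    refine (hd.nonneg a q).lt_of_ne fun h => hpq ?_
    rw [← h, sub_zero, abs_of_nonneg (hd.nonneg a p)]; linarith
  have hle : ∀ x y, |d a x - d a y| ≤ d a b := fun x y => abs_sub_le_iff.2
    ⟨by linarith [hA x, hd.nonneg x b, hd.nonneg a y],
      by linarith [hA y, hd.nonneg y b, hd.nonneg a x]⟩
  by_contra! hw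
  obtain ⟨hwa, hwb, hwp, hwq⟩ := hw
  have hp_ne_q : p ≠ q := by rintro rfl; simp [hd.dist_self] at hpq
  have hcol' := (insert_mem_metricEdges_iff hd hwp.symm hp_ne_q hwq).1
    (hcol p w q hwp.symm hp_ne_q hwq)
  rcases key p w with hpw | ⟨hpw, hpw'⟩ <;> rcases key q w with hqw | ⟨hqw, hqw'⟩
  · rcases hcol' with h | h | h
    · have h' : |d a p - d a w| + |d a w - d a q| = d a p + d a q := by
        rw [abs_sub_comm (d a w), ← hpw, ← hqw, hsum, ← hpqD, hd.symm q w]; exact h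
      rcases eq_zero_or_eq_add_of_abs_sub_add_abs_sub hp0 hq0 h' with h0 | hD
      · exact hwa ((hd.eq_iff a w).1 h0).symm
      · exact hwb ((hd.eq_iff w b).1 (by linarith [hA w]))
    · refine hwp ((hd.eq_iff p w).1 ?_).symm
      linarith [hd.symm w p, hd.symm w q, hle q w, hd.nonneg p w]
    · refine hwq ((hd.eq_iff q w).1 ?_).symm
      linarith [hle p w, hd.nonneg q w]
  · exact hwp ((hd.eq_iff p w).1 (by rw [hpw]; simp; linarith)).symm
  · exact hwq ((hd.eq_iff q w).1 (by rw [hqw]; simp; linarith)).symm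
  · rw [hd.symm w q, hqw', hd.symm w p, hpw', hpqD] at hcol'
    rcases hcol' with h | h | h <;> linarith

end LineEmbedding

theorem exists_eq_abs_sub_of_forall_mem_metricEdges {α : Type*} [Fintype α] {d : α → α → ℝ}
    (hα : 5 ≤ Fintype.card α) (hd : IsMetric d)
    (hcol : ∀ u v w, u ≠ v → u ≠ w → v ≠ w → ({u, v, w} : Set α) ∈ metricEdges d) :
    ∃ f : α → ℝ, ∀ u v, d u v = |f u - f v| := by
  have : Nonempty (α × α) := by
    have := Fintype.card_pos_iff.1 (by omega : 0 < Fintype.card α); infer_instance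
  obtain ⟨⟨a, b⟩, hmax⟩ := Finite.exists_max fun x : α × α => d x.1 x.2
  refine ⟨d a, fun p q => ?_⟩
  by_contra hpq
  classical
  have hsub : (Finset.univ : Finset α) ⊆ {a, b, p, q} := fun w _ => by
    simpa using eq_or_eq_or_eq_or_eq_of_ne_abs_sub hd hcol (fun u v => hmax (u, v)) hpq w
  have := (Finset.card_le_card hsub).trans Finset.card_le_four
  rw [Finset.card_univ] at this
  omega

/-! ### Hypergraphs based on a graph -/

section BasedOn

variable {V : Type*} {G : SimpleGraph V}

lemma insert_some_mem_basedOn {u v w : V} (huv : u ≠ v) (huw : u ≠ w) (hvw : v ≠ w) :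
    ({some u, some v, some w} : Set (Option V)) ∈ basedOn G :=
  Or.inl ⟨u, v, w, huv, huw, hvw, rfl⟩

lemma insert_none_mem_basedOn_iff {u v : V} :
    ({none, some u, some v} : Set (Option V)) ∈ basedOn G ↔ G.Adj u v := by
  refine ⟨?_, fun h => Or.inr ⟨u, v, h, rfl⟩⟩
  rintro (⟨a, b, c, -, -, -, hs⟩ | ⟨a, b, hab, hs⟩)
  · have : none ∈ ({some a, some b, some c} : Set (Option V)) := hs ▸ by simp
    simp at this
  · have hpre : ∀ x y : V, some ⁻¹' ({none, some x, some y} : Set (Option V)) = {x, y} :=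
      fun x y => by ext; simp
    have huv := congrArg (some ⁻¹' ·) hs
    simp only [hpre] at huv
    rcases Set.pair_eq_pair_iff.1 huv with ⟨rfl, rfl⟩ | ⟨rfl, rfl⟩
    exacts [hab, hab.symm]

lemma ncard_eq_three_of_mem_basedOn {s : Set (Option V)} (hs : s ∈ basedOn G) : s.ncard = 3 := by
  rcases hs with ⟨u, v, w, huv, huw, hvw, rfl⟩ | ⟨u, v, huv, rfl⟩
  · exact Set.ncard_eq_three.2 ⟨_, _, _, by simpa, by simpa, by simpa, rfl⟩
  · exact Set.ncard_eq_three.2 ⟨_, _, _, by simp, by simp, by simpa using huv.ne, rfl⟩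

lemma mem_basedOn_iff_of_adj_iff {G' : SimpleGraph V} {w : Option V} {s : Set (Option V)}
    (hs : w ∉ s)
    (h : ∀ u v, w ∉ ({none, some u, some v} : Set (Option V)) → (G.Adj u v ↔ G'.Adj u v)) :
    s ∈ basedOn G ↔ s ∈ basedOn G' := by
  refine or_congr Iff.rfl ⟨?_, ?_⟩ <;> rintro ⟨u, v, huv, rfl⟩
  exacts [⟨u, v, (h u v hs).1 huv, rfl⟩, ⟨u, v, (h u v hs).2 huv, rfl⟩]

lemma eq_basedOn {E : Set (Set (Option V))}
    (hE : ∀ s ∈ E, ∃ a b c, a ≠ b ∧ a ≠ c ∧ b ≠ c ∧ s = {a, b, c})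
    (hsome : ∀ u v w, u ≠ v → u ≠ w → v ≠ w → ({some u, some v, some w} : Set (Option V)) ∈ E)
    (hnone : ∀ u v, u ≠ v → (({none, some u, some v} : Set (Option V)) ∈ E ↔ G.Adj u v)) :
    E = basedOn G := by
  ext s
  constructor
  · intro hs
    obtain ⟨a, b, c, hab, hac, hbc, rfl⟩ := hE s hs
    rcases a with _ | u <;> rcases b with _ | v <;> rcases c with _ | w <;>
      simp only [ne_eq, reduceCtorEq, not_false_eq_true, not_true_eq_false, Option.some.injEq]
        at hab hac hbc ⊢
    · exact insert_none_mem_basedOn_iff.2 ((hnone v w hbc).1 hs)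
    · rw [Set.insert_comm] at hs ⊢
      exact insert_none_mem_basedOn_iff.2 ((hnone u w hac).1 hs)
    · rw [Set.pair_comm, Set.insert_comm] at hs ⊢
      exact insert_none_mem_basedOn_iff.2 ((hnone u v hab).1 hs)
    · exact insert_some_mem_basedOn hab hac hbc
  · rintro (⟨u, v, w, huv, huw, hvw, rfl⟩ | ⟨u, v, huv, rfl⟩)
    exacts [hsome u v w huv huw hvw, (hnone u v huv.ne).2 huv]

end BasedOn

lemma cycleGraph_adj_iff_val {n : ℕ} (hn : 2 ≤ n) {u v : Fin n} :
    (cycleGraph n).Adj u v ↔ (v : ℕ) = u + 1 ∨ (u : ℕ) = v + 1 ∨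
      ((u : ℕ) = 0 ∧ (v : ℕ) = n - 1) ∨ ((v : ℕ) = 0 ∧ (u : ℕ) = n - 1) := by
  have := u.isLt; have := v.isLt
  rw [cycleGraph_adj']
  rcases lt_trichotomy u v with h | rfl | h
  · rw [Fin.coe_sub_iff_lt.2 h, Fin.coe_sub_iff_le.2 h.le]
    rw [Fin.lt_def] at h; omega
  · rw [Fin.coe_sub_iff_le.2 le_rfl]; omega
  · rw [Fin.coe_sub_iff_le.2 h.le, Fin.coe_sub_iff_lt.2 h]
    rw [Fin.lt_def] at h; omega

section ApexMetric

variable {V : Type*}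

def unitDistGraph (F : V → ℤ) : SimpleGraph V where
  Adj u v := |F u - F v| = 1
  symm := ⟨fun _ _ h => by rwa [abs_sub_comm]⟩
  loopless := ⟨fun _ h => by simp at h⟩

/-- The apex distances of two points at distance one differ by exactly one, so the apex is collinear
with exactly these pairs (`metricEdges_apexDist`). -/
def apexDist (F : V → ℤ) (c : ℝ) : Option V → Option V → ℝ
  | none, none => 0
  | none, some v => c + (F v % 2 : ℤ)
  | some u, none => c + (F u % 2 : ℤ)
  | some u, some v => (|F u - F v| : ℤ)

variable {F : V → ℤ} {c : ℝ}

lemma cast_emod_two_nonneg_and_le_one (a : ℤ) : (0 : ℝ) ≤ (a % 2 : ℤ) ∧ ((a % 2 : ℤ) : ℝ) ≤ 1 := by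
  constructor <;> norm_cast <;> omega

lemma one_le_cast_abs_sub (hF : Injective F) {u v : V} (huv : u ≠ v) :
    (1 : ℝ) ≤ (|F u - F v| : ℤ) := by
  have : F u ≠ F v := hF.ne huv
  norm_cast
  simp only [abs_eq_max_neg]
  omega

lemma isMetric_apexDist (hF : Injective F) (hc : ∀ u v, ((|F u - F v| : ℤ) : ℝ) < 2 * c) :
    IsMetric (apexDist F c) := by
  have hc0 : ∀ v : V, 0 < c := fun v => by simpa using hc v v
  have hp := fun v => cast_emod_two_nonneg_and_le_one (F v)
  have h1 := fun u v (h : u ≠ v) => one_le_cast_abs_sub hF h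
  have htri : ∀ u v w : V, ((|F u - F w| : ℤ) : ℝ) ≤ (|F u - F v| : ℤ) + (|F v - F w| : ℤ) :=
    fun u v w => by exact_mod_cast abs_sub_le _ _ _
  refine ⟨?_, ?_, ?_⟩
  · rintro (_ | u) (_ | v) <;> simp only [apexDist, reduceCtorEq, iff_false,
      Option.some.injEq]
    · linarith [hp v, hc0 v]
    · linarith [hp u, hc0 u]
    · norm_cast; rw [abs_eq_zero, sub_eq_zero, hF.eq_iff]
  · rintro (_ | u) (_ | v) <;> simp only [apexDist]
    rw [abs_sub_comm]
  · rintro (_ | u) (_ | v) (_ | w) <;> simp only [apexDist]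
    · norm_num
    · linarith
    · linarith [hp v, hc0 v]
    · rcases eq_or_ne v w with rfl | hvw
      · simp
      · linarith [hp v, hp w, h1 v w hvw]
    · linarith
    · linarith [hp u, hp w, hc u w]
    · rcases eq_or_ne u v with rfl | huv
      · simp
      · linarith [hp u, hp v, h1 u v huv]
    · exact htri u v w

lemma insert_none_mem_metricEdges_apexDist_iff (hF : Injective F)
    (hc : ∀ u v, ((|F u - F v| : ℤ) : ℝ) < 2 * c) {u v : V} (huv : u ≠ v) :
    ({none, some u, some v} : Set (Option V)) ∈ metricEdges (apexDist F c) ↔ |F u - F v| = 1 := by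
  rw [insert_mem_metricEdges_iff (isMetric_apexDist hF hc) (by simp) (by simp) (by simpa)]
  simp only [apexDist]
  rw [abs_sub_comm (F v)]
  have hne := hF.ne huv
  constructor
  · rintro (h | h | h)
    · have h' : F u % 2 + |F u - F v| = F v % 2 := by
        have : ((F u % 2 + |F u - F v| : ℤ) : ℝ) = (F v % 2 : ℤ) := by rw [Int.cast_add]; linarith
        exact_mod_cast this
      simp only [abs_eq_max_neg] at h' ⊢; omega
    · linarith [cast_emod_two_nonneg_and_le_one (F u), cast_emod_two_nonneg_and_le_one (F v),
        hc u v]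
    · have h' : F v % 2 + |F u - F v| = F u % 2 := by
        have : ((F v % 2 + |F u - F v| : ℤ) : ℝ) = (F u % 2 : ℤ) := by rw [Int.cast_add]; linarith
        exact_mod_cast this
      simp only [abs_eq_max_neg] at h' ⊢; omega
  · intro h
    have h2 := (abs_eq zero_le_one).1 h
    rw [h]
    rcases (show F u % 2 + 1 = F v % 2 ∨ F v % 2 + 1 = F u % 2 by omega) with h' | h'
    · left
      have : ((F u % 2 + 1 : ℤ) : ℝ) = (F v % 2 : ℤ) := by rw [h']
      push_cast at this ⊢; linarith
    · right; right
      have : ((F v % 2 + 1 : ℤ) : ℝ) = (F u % 2 : ℤ) := by rw [h']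
      push_cast at this ⊢; linarith

lemma metricEdges_apexDist (hF : Injective F)
    (hc : ∀ u v, ((|F u - F v| : ℤ) : ℝ) < 2 * c) :
    metricEdges (apexDist F c) = basedOn (unitDistGraph F) := by
  refine eq_basedOn (fun s ⟨a, b, c', hs, hab, hac, hbc, _⟩ => ⟨a, b, c', hab, hac, hbc, hs⟩)
    (fun u v w huv huw hvw => ?_) fun u v huv => insert_none_mem_metricEdges_apexDist_iff hF hc huv
  rw [insert_mem_metricEdges_iff (isMetric_apexDist hF hc) (by simpa) (by simpa) (by simpa)]
  simp only [apexDist]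
  norm_cast
  simp only [abs_eq_max_neg]
  omega

end ApexMetric

theorem exists_isMetric_agree_basedOn_cycleGraph {n : ℕ} (hn : 3 ≤ n) (w : Option (Fin n)) :
    ∃ d, IsMetric d ∧ ∀ s, w ∉ s → (s ∈ basedOn (cycleGraph n) ↔ s ∈ metricEdges d) := by
  obtain ⟨F, hF, hc, hadj⟩ : ∃ F : Fin n → ℤ, Injective F ∧
      (∀ u v, |F u - F v| < 2 * n) ∧ ∀ u v, w ∉ ({none, some u, some v} : Set (Option (Fin n))) →
        ((cycleGraph n).Adj u v ↔ (unitDistGraph F).Adj u v) := by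
    rcases w with _ | m
    · refine ⟨fun i => i, fun i j h => Fin.ext (by simpa using h), fun u v => ?_,
        fun u v h => absurd (by simp) h⟩
      have := u.isLt; have := v.isLt
      simp only [abs_eq_max_neg]; omega
    -- number the cycle from the successor of `m`, so that the rest of it is the path `0, …, n-2`
    · refine ⟨fun i => if (m : ℕ) < i then (i : ℤ) - m - 1 else i + n - m - 1, fun i j h => ?_,
        fun u v => ?_, fun u v h => ?_⟩
      · have := i.isLt; have := j.isLt
        rw [Fin.ext_iff]; dsimp only at h; split_ifs at h <;> omega
      · have := u.isLt; have := v.isLt; have := m.isLt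
        simp only [abs_eq_max_neg]; split_ifs <;> omega
      · simp only [Set.mem_insert_iff, Set.mem_singleton_iff, reduceCtorEq, Option.some.injEq,
          false_or, not_or, Fin.ext_iff] at h
        have := u.isLt; have := v.isLt; have := m.isLt
        rw [cycleGraph_adj_iff_val (by omega)]
        show _ ↔ |_ - _| = 1
        simp only [abs_eq_max_neg]; split_ifs <;> omega
  have hc' : ∀ u v, ((|F u - F v| : ℤ) : ℝ) < 2 * (n : ℝ) := fun u v => by exact_mod_cast hc u v
  refine ⟨apexDist F n, isMetric_apexDist hF hc', fun s hs => ?_⟩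
  rw [metricEdges_apexDist hF hc']
  exact mem_basedOn_iff_of_adj_iff hs hadj

/-! ### Two-regular triangle-free graphs -/

structure TwoRegularTriangleFreeOn {V : Type*} (G : SimpleGraph V) (S : Set V) : Prop where
  exists_adj_adj : ∀ v ∈ S, ∃ p ∈ S, ∃ q ∈ S, p ≠ q ∧ G.Adj v p ∧ G.Adj v q
  not_three_adj : ∀ v p q r, p ≠ q → p ≠ r → q ≠ r → G.Adj v p → G.Adj v q → G.Adj v r → False
  not_triangle : ∀ u v w, G.Adj u v → G.Adj v w → G.Adj u w → False

lemma twoRegularTriangleFreeOn_cycleGraph {n : ℕ} (hn : 4 ≤ n) :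
    TwoRegularTriangleFreeOn (SimpleGraph.cycleGraph n) Set.univ where
  exists_adj_adj v _ := by
    refine ⟨⟨if v + 1 < n then v + 1 else 0, by split_ifs <;> omega⟩, trivial,
      ⟨if (v : ℕ) = 0 then n - 1 else v - 1, by split_ifs <;> omega⟩, trivial, ?_, ?_, ?_⟩ <;>
    simp only [ne_eq, Fin.ext_iff, cycleGraph_adj_iff_val (by omega : 2 ≤ n)] <;>
    split_ifs <;> omega
  not_three_adj v p q r hpq hpr hqr := by
    simp only [ne_eq, Fin.ext_iff, cycleGraph_adj_iff_val (by omega : 2 ≤ n)] at *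
    omega
  not_triangle u v w := by
    simp only [cycleGraph_adj_iff_val (by omega : 2 ≤ n)]
    omega

lemma TwoRegularTriangleFreeOn.map {V W : Type*} {G : SimpleGraph V} {S : Set V}
    (hG : TwoRegularTriangleFreeOn G S) (e : V ↪ W) :
    TwoRegularTriangleFreeOn (G.map e) (e '' S) where
  exists_adj_adj := by
    rintro _ ⟨v, hv, rfl⟩
    obtain ⟨p, hp, q, hq, hpq, hvp, hvq⟩ := hG.exists_adj_adj v hv
    exact ⟨e p, ⟨p, hp, rfl⟩, e q, ⟨q, hq, rfl⟩, e.injective.ne hpq, by simpa, by simpa⟩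
  not_three_adj := by
    simp only [SimpleGraph.map_adj]
    rintro _ _ _ _ hpq hpr hqr ⟨v, p, hvp, rfl, rfl⟩ ⟨v', q, hvq, hv', rfl⟩
      ⟨v'', r, hvr, hv'', rfl⟩
    have := e.injective hv'; have := e.injective hv''; subst v' v''
    exact hG.not_three_adj v p q r (ne_of_apply_ne e hpq) (ne_of_apply_ne e hpr)
      (ne_of_apply_ne e hqr) hvp hvq hvr
  not_triangle := by
    simp only [SimpleGraph.map_adj]
    rintro _ _ _ ⟨u, v, huv, rfl, rfl⟩ ⟨v', w, hvw, hv', rfl⟩ ⟨u', w', huw, hu', hw'⟩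
    have := e.injective hv'; have := e.injective hu'; have := e.injective hw'; subst v' u' w'
    exact hG.not_triangle u v w huv hvw huw

lemma TwoRegularTriangleFreeOn.adj_of_forall_adj {V : Type*} {G : SimpleGraph V} {S : Set V}
    (hG : TwoRegularTriangleFreeOn G S) {v c c' : V} (hv : v ∈ S)
    (hr : ∀ r ∈ S, G.Adj v r → r = c ∨ r = c') : G.Adj v c := by
  obtain ⟨p, hp, q, hq, hpq, hvp, hvq⟩ := hG.exists_adj_adj v hv
  rcases hr p hp hvp with rfl | rfl
  · exact hvp
  rcases hr q hq hvq with rfl | rfl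
  · exact hvq
  · exact absurd rfl hpq

/-! ### Models of a graph by a line and an apex -/

lemma iff_even_iff_of_alternating {P Q : ℕ → Prop} {N : ℕ} (hPQ : ∀ t ≤ N, P t ∨ Q t)
    (hP : ∀ t < N, P t → ¬P (t + 1)) (hQ : ∀ t < N, Q t → ¬Q (t + 1)) :
    ∀ t ≤ N, (P t ↔ (Even t ↔ P 0))
  | 0, _ => by simp
  | t + 1, ht => by
    have hstep : P (t + 1) ↔ ¬P t :=
      ⟨fun h1 h0 => hP t (by omega) h0 h1, fun h0 => (hPQ (t + 1) ht).resolve_right fun hq =>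
        hQ t (by omega) ((hPQ t (by omega)).resolve_left h0) hq⟩
    rw [hstep, iff_even_iff_of_alternating hPQ hP hQ t (by omega), Nat.even_add_one]
    tauto

/-- Vertex `i` of `G` stands for the point at position `p i` of a line, with `p` increasing, and
`H i = y i - p i`, `K i = y i + p i`, where `y i` is its distance from an apex; the fields are the
triangle inequalities and the collinearity of the apex with two points of the line. -/
structure IsHKModel (n : ℕ) (G : SimpleGraph ℕ) (H K : ℕ → ℝ) : Prop where
  antitoneOn : AntitoneOn H (Set.Iio n)
  monotoneOn : MonotoneOn K (Set.Iio n)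
  add_nonneg : ∀ i j, i < j → j < n → 0 ≤ K i + H j
  adj_iff : ∀ i j, i < j → j < n → (G.Adj i j ↔ H i = H j ∨ K i = K j ∨ K i + H j = 0)

namespace IsHKModel

variable {n : ℕ} {G : SimpleGraph ℕ} {H K : ℕ → ℝ} (h : IsHKModel n G H K)
include h

lemma add_eq_zero_of_le_of_le {i j i' j' : ℕ} (hi : i' ≤ i) (hij : i < j) (hj : j ≤ j')
    (hj' : j' < n) (hs : K i + H j = 0) : K i' + H j' = 0 := by
  have := h.monotoneOn (Set.mem_Iio.2 (by omega)) (Set.mem_Iio.2 (by omega)) hi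
  have := h.antitoneOn (Set.mem_Iio.2 (by omega)) (Set.mem_Iio.2 hj') hj
  linarith [h.add_nonneg i' j' (by omega) hj']

lemma adj_of_add_eq_zero {i j i' j' : ℕ} (hi : i' ≤ i) (hij : i < j) (hj : j ≤ j')
    (hj' : j' < n) (hs : K i + H j = 0) : G.Adj i' j' :=
  (h.adj_iff i' j' (by omega) hj').2 <| Or.inr <| Or.inr <|
    h.add_eq_zero_of_le_of_le hi hij hj hj' hs

variable (hG : TwoRegularTriangleFreeOn G (Set.Iio n))
include hG

lemma H_ne_of_lt_of_lt {i l j : ℕ} (hil : i < l) (hlj : l < j) (hj : j < n) : H i ≠ H j := by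
  intro hij
  have := h.antitoneOn (Set.mem_Iio.2 (by omega)) (Set.mem_Iio.2 (by omega)) hil.le
  have := h.antitoneOn (Set.mem_Iio.2 (by omega)) (Set.mem_Iio.2 hj) hlj.le
  exact hG.not_triangle i l j ((h.adj_iff i l hil (by omega)).2 (Or.inl (by linarith)))
    ((h.adj_iff l j hlj hj).2 (Or.inl (by linarith))) ((h.adj_iff i j (by omega) hj).2 (Or.inl hij))

lemma K_ne_of_lt_of_lt {i l j : ℕ} (hil : i < l) (hlj : l < j) (hj : j < n) : K i ≠ K j := by
  intro hij
  have := h.monotoneOn (Set.mem_Iio.2 (by omega)) (Set.mem_Iio.2 (by omega)) hil.le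
  have := h.monotoneOn (Set.mem_Iio.2 (by omega)) (Set.mem_Iio.2 hj) hlj.le
  exact hG.not_triangle i l j ((h.adj_iff i l hil (by omega)).2 (Or.inr (Or.inl (by linarith))))
    ((h.adj_iff l j hlj hj).2 (Or.inr (Or.inl (by linarith))))
    ((h.adj_iff i j (by omega) hj).2 (Or.inr (Or.inl hij)))

lemma add_eq_zero_of_adj {i j : ℕ} (hij : i + 2 ≤ j) (hj : j < n) (hadj : G.Adj i j) :
    K i + H j = 0 := by
  rcases (h.adj_iff i j (by omega) hj).1 hadj with hH | hK | hs
  · exact absurd hH (h.H_ne_of_lt_of_lt hG (Nat.lt_succ_self i) (by omega) hj)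
  · exact absurd hK (h.K_ne_of_lt_of_lt hG (Nat.lt_succ_self i) (by omega) hj)
  · exact hs

lemma le_one_of_add_eq_zero {i j : ℕ} (hij : i < j) (hj : j < n) (hs : K i + H j = 0) :
    i ≤ 1 := by
  by_contra! hi
  exact hG.not_three_adj j 0 1 i (by omega) (by omega) (by omega)
    (h.adj_of_add_eq_zero (Nat.zero_le i) hij le_rfl hj hs).symm
    (h.adj_of_add_eq_zero (by omega) hij le_rfl hj hs).symm
    (h.adj_of_add_eq_zero le_rfl hij le_rfl hj hs).symm

lemma sub_two_le_of_add_eq_zero {i j : ℕ} (hij : i < j) (hj : j < n) (hs : K i + H j = 0) :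
    n - 2 ≤ j := by
  by_contra! hj2
  exact hG.not_three_adj i j (n - 2) (n - 1) (by omega) (by omega) (by omega)
    (h.adj_of_add_eq_zero le_rfl hij le_rfl hj hs)
    (h.adj_of_add_eq_zero le_rfl hij (by omega) (by omega) hs)
    (h.adj_of_add_eq_zero le_rfl hij (by omega) (by omega) hs)

lemma eq_add_one_or_of_adj {v p : ℕ} (hv : v < n) (hp : p < n) (hadj : G.Adj v p) :
    p = v + 1 ∨ v = p + 1 ∨ (v ≤ 1 ∧ n - 2 ≤ p ∧ K v + H p = 0) ∨
      (p ≤ 1 ∧ n - 2 ≤ v ∧ K p + H v = 0) := by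
  rcases lt_trichotomy v p with hvp | rfl | hpv
  · by_cases hp1 : p = v + 1
    · exact Or.inl hp1
    have hs := h.add_eq_zero_of_adj hG (by omega) hp hadj
    exact Or.inr (Or.inr (Or.inl ⟨h.le_one_of_add_eq_zero hG hvp hp hs,
      h.sub_two_le_of_add_eq_zero hG hvp hp hs, hs⟩))
  · exact absurd rfl hadj.ne
  · by_cases hv1 : v = p + 1
    · exact Or.inr (Or.inl hv1)
    have hs := h.add_eq_zero_of_adj hG (by omega) hv hadj.symm
    exact Or.inr (Or.inr (Or.inr ⟨h.le_one_of_add_eq_zero hG hpv hv hs,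
      h.sub_two_le_of_add_eq_zero hG hpv hv hs, hs⟩))

lemma eq_add_one_or_eq_sub_one_of_adj {v : ℕ} (hv2 : 2 ≤ v) (hvn : v + 3 ≤ n) {r : ℕ} (hr : r < n)
    (hadj : G.Adj v r) : r = v + 1 ∨ r = v - 1 := by
  rcases h.eq_add_one_or_of_adj hG (by omega) hr hadj with h' | h' | h' | h' <;> omega

lemma adj_add_one (hn : 5 ≤ n) {v : ℕ} (hv1 : 1 ≤ v) (hvn : v + 3 ≤ n) : G.Adj v (v + 1) := by
  rcases (show v = 1 ∨ 2 ≤ v by omega) with rfl | hv2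
  · refine (hG.adj_of_forall_adj (v := 2) (c := 1) (c' := 3) (Set.mem_Iio.2 (by omega))
      fun r hr hadj => ?_).symm
    have := h.eq_add_one_or_eq_sub_one_of_adj hG le_rfl (by omega) (Set.mem_Iio.1 hr) hadj
    omega
  · exact hG.adj_of_forall_adj (c' := v - 1) (Set.mem_Iio.2 (by omega)) fun r hr hadj =>
      h.eq_add_one_or_eq_sub_one_of_adj hG hv2 hvn (Set.mem_Iio.1 hr) hadj

variable (hn : 6 ≤ n)
include hn

lemma not_adj_one_sub_one : ¬G.Adj 1 (n - 1) := by
  intro h1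
  have hs := h.add_eq_zero_of_adj hG (by omega) (by omega) h1
  have hs0 := h.add_eq_zero_of_le_of_le (Nat.zero_le 1) (by omega) le_rfl (by omega) hs
  have hK : K 0 = K 1 := by linarith
  exact hG.not_three_adj 1 0 2 (n - 1) (by omega) (by omega) (by omega)
    ((h.adj_iff 0 1 one_pos (by omega)).2 (Or.inr (Or.inl hK))).symm
    (h.adj_add_one hG (by omega) le_rfl (by omega)) h1

lemma not_adj_one_sub_two : ¬G.Adj 1 (n - 2) := fun h1 =>
  h.not_adj_one_sub_one hG hn <| h.adj_of_add_eq_zero le_rfl (by omega) (by omega) (by omega)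
    (h.add_eq_zero_of_adj hG (by omega) (by omega) h1)

lemma not_adj_zero_sub_two : ¬G.Adj 0 (n - 2) := by
  intro h0
  have hs := h.add_eq_zero_of_adj hG (by omega) (by omega) h0
  have hs1 := h.add_eq_zero_of_le_of_le le_rfl (by omega) (show n - 2 ≤ n - 1 by omega)
    (by omega) hs
  have hH : H (n - 2) = H (n - 1) := by linarith
  have h3 := h.adj_add_one hG (by omega) (v := n - 3) (by omega) (by omega)
  rw [show n - 3 + 1 = n - 2 by omega] at h3
  exact hG.not_three_adj (n - 2) (n - 3) (n - 1) 0 (by omega) (by omega) (by omega) h3.symm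
    ((h.adj_iff _ _ (by omega) (by omega)).2 (Or.inl hH)) h0.symm

lemma adj_zero_one : G.Adj 0 1 := by
  refine (hG.adj_of_forall_adj (c' := 2) (Set.mem_Iio.2 (by omega)) fun r hr hadj => ?_).symm
  have hr := Set.mem_Iio.1 hr
  rcases h.eq_add_one_or_of_adj hG (by omega) hr hadj with h' | h' | h' | h'
  · omega
  · omega
  · rcases (show r = n - 2 ∨ r = n - 1 by omega) with rfl | rfl
    · exact absurd hadj (h.not_adj_one_sub_two hG hn)
    · exact absurd hadj (h.not_adj_one_sub_one hG hn)
  · omega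

lemma adj_sub_two_sub_one : G.Adj (n - 2) (n - 1) := by
  refine hG.adj_of_forall_adj (c' := n - 3) (Set.mem_Iio.2 (by omega)) fun r hr hadj => ?_
  have hr := Set.mem_Iio.1 hr
  rcases h.eq_add_one_or_of_adj hG (by omega) hr hadj with h' | h' | h' | h'
  · omega
  · omega
  · omega
  · rcases (show r = 0 ∨ r = 1 by omega) with rfl | rfl
    · exact absurd hadj.symm (h.not_adj_zero_sub_two hG hn)
    · exact absurd hadj.symm (h.not_adj_one_sub_two hG hn)

lemma adj_zero_sub_one : G.Adj 0 (n - 1) := by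
  refine hG.adj_of_forall_adj (c' := 1) (Set.mem_Iio.2 (by omega)) fun r hr hadj => ?_
  have hr := Set.mem_Iio.1 hr
  rcases h.eq_add_one_or_of_adj hG (by omega) hr hadj with h' | h' | h' | h'
  · omega
  · omega
  · rcases (show r = n - 2 ∨ r = n - 1 by omega) with rfl | rfl
    · exact absurd hadj (h.not_adj_zero_sub_two hG hn)
    · exact Or.inl rfl
  · omega

end IsHKModel

/-- The consecutive vertices `0, 1, …, n-1` form a path whose edges alternately come from `H` and
from `K`; as `n - 1` is odd, the first and the last edge have the same type, and either way the
chord `0 ~ n-1` forces a third neighbour at one end. -/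
theorem not_isHKModel {n : ℕ} {G : SimpleGraph ℕ} {H K : ℕ → ℝ} (hn : 6 ≤ n) (he : Even n)
    (hG : TwoRegularTriangleFreeOn G (Set.Iio n)) : ¬IsHKModel n G H K := by
  intro h
  have hpath : ∀ t, t + 2 ≤ n → G.Adj t (t + 1) := fun t ht => by
    rcases (show t = 0 ∨ (1 ≤ t ∧ t + 3 ≤ n) ∨ t = n - 2 by omega) with rfl | ht' | rfl
    · exact h.adj_zero_one hG hn
    · exact h.adj_add_one hG (by omega) ht'.1 ht'.2
    · rw [show n - 2 + 1 = n - 1 by omega]; exact h.adj_sub_two_sub_one hG hn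
  have htype : ∀ t ≤ n - 2, H t = H (t + 1) ∨ K t = K (t + 1) := fun t ht => by
    rcases (h.adj_iff t (t + 1) (by omega) (by omega)).1 (hpath t (by omega)) with hH | hK | hs
    · exact Or.inl hH
    · exact Or.inr hK
    · have := h.le_one_of_add_eq_zero hG (by omega) (by omega) hs
      have := h.sub_two_le_of_add_eq_zero hG (by omega) (by omega) hs
      omega
  have hpar := iff_even_iff_of_alternating htype
    (fun t ht h1 h2 => h.H_ne_of_lt_of_lt hG (Nat.lt_succ_self t) (Nat.lt_succ_self _) (by omega)
      (h1.trans h2))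
    (fun t ht h1 h2 => h.K_ne_of_lt_of_lt hG (Nat.lt_succ_self t) (Nat.lt_succ_self _) (by omega)
      (h1.trans h2)) (n - 2) le_rfl
  rw [show n - 2 + 1 = n - 1 by omega, iff_true_left ((Nat.even_sub (by omega)).2 (by simpa))]
    at hpar
  have hchord := h.add_eq_zero_of_adj hG (by omega) (by omega) (h.adj_zero_sub_one hG hn)
  by_cases hH : H 0 = H 1
  · refine h.not_adj_zero_sub_two hG hn ((h.adj_iff _ _ (by omega) (by omega)).2 ?_)
    rw [hpar.2 hH]; exact Or.inr (Or.inr hchord)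
  · refine h.not_adj_one_sub_one hG hn ((h.adj_iff _ _ (by omega) (by omega)).2 ?_)
    rw [← (htype 0 (by omega)).resolve_left hH]; exact Or.inr (Or.inr hchord)

lemma exists_isHKModel {n : ℕ} {G : SimpleGraph (Fin n)}
    {d : Option (Fin n) → Option (Fin n) → ℝ} (hd : IsMetric d) (hE : basedOn G = metricEdges d)
    {f : Fin n → ℝ} (hf : ∀ i j, d (some i) (some j) = |f i - f j|) {π : Equiv.Perm (Fin n)}
    (hπ : StrictMono (f ∘ π)) :
    ∃ H K, IsHKModel n (G.map (π.symm.toEmbedding.trans Fin.valEmbedding)) H K := by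
  let y : Fin n → ℝ := fun i => d none (some i)
  have hext : ∀ φ : Fin n → ℝ, ∃ Φ : ℕ → ℝ, ∀ k (hk : k < n), Φ k = φ ⟨k, hk⟩ :=
    fun φ => ⟨fun k => if h : k < n then φ ⟨k, h⟩ else 0, fun _ hk => dif_pos hk⟩
  obtain ⟨H, hH⟩ := hext fun i => y (π i) - f (π i)
  obtain ⟨K, hK⟩ := hext fun i => y (π i) + f (π i)
  have hline : ∀ i j (hi : i < n) (hj : j < n), i ≤ j →
      d (some (π ⟨i, hi⟩)) (some (π ⟨j, hj⟩)) = f (π ⟨j, hj⟩) - f (π ⟨i, hi⟩) := by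
    intro i j hi hj hij
    have : f (π ⟨i, hi⟩) ≤ f (π ⟨j, hj⟩) := hπ.monotone (Fin.mk_le_mk.2 hij)
    rw [hf, abs_sub_comm, abs_of_nonneg (sub_nonneg.2 this)]
  have hy : ∀ a b, y b ≤ y a + d (some a) (some b) := fun a b => hd.triangle _ _ _
  have hyy : ∀ a b, d (some a) (some b) ≤ y a + y b := fun a b => by
    linarith [hd.triangle (some a) none (some b), hd.symm (some a) none]
  refine ⟨H, K, ⟨?_, ?_, ?_, ?_⟩⟩
  · intro i hi j hj hij
    rw [Set.mem_Iio] at hi hj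
    rw [hH i hi, hH j hj]
    linarith [hy (π ⟨i, hi⟩) (π ⟨j, hj⟩), hline i j hi hj hij]
  · intro i hi j hj hij
    rw [Set.mem_Iio] at hi hj
    rw [hK i hi, hK j hj]
    linarith [hy (π ⟨j, hj⟩) (π ⟨i, hi⟩), hline i j hi hj hij,
      hd.symm (some (π ⟨j, hj⟩)) (some (π ⟨i, hi⟩))]
  · intro i j hij hj
    have hi : i < n := by omega
    rw [hK i hi, hH j hj]
    linarith [hyy (π ⟨i, hi⟩) (π ⟨j, hj⟩), hline i j hi hj hij.le]
  · intro i j hij hj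
    have hi : i < n := by omega
    have hab : π ⟨i, hi⟩ ≠ π ⟨j, hj⟩ := π.injective.ne (by simp [Fin.ext_iff]; omega)
    have hmap : (G.map (π.symm.toEmbedding.trans Fin.valEmbedding)).Adj i j ↔
        G.Adj (π ⟨i, hi⟩) (π ⟨j, hj⟩) := by
      rw [← map_adj_apply (f := π.symm.toEmbedding.trans Fin.valEmbedding)]; simp
    rw [hmap, ← insert_none_mem_basedOn_iff, hE,
      insert_mem_metricEdges_iff hd (by simp) (by simp) ((Option.some_injective _).ne hab),
      hH i hi, hH j hj, hK i hi, hK j hj,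
      hline i j hi hj hij.le, hd.symm (some _) none, hd.symm (some (π ⟨j, hj⟩)),
      hline i j hi hj hij.le]
    constructor <;> rintro (h | h | h)
    · exact Or.inl (by linarith)
    · exact Or.inr (Or.inr (by linarith))
    · exact Or.inr (Or.inl (by linarith))
    · exact Or.inl (by linarith)
    · exact Or.inr (Or.inr (by linarith))
    · exact Or.inr (Or.inl (by linarith))

theorem not_isMetricHypergraph_basedOn_cycleGraph {n : ℕ} (hn : 6 ≤ n) (he : Even n) :
    ¬IsMetricHypergraph (basedOn (cycleGraph n)) := by
  rintro ⟨d, hd, hE⟩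
  obtain ⟨f, hf⟩ := exists_eq_abs_sub_of_forall_mem_metricEdges (by simp; omega)
    (hd.comp (Option.some_injective _)) fun u v w huv huw hvw => by
      rw [mem_metricEdges_comp_iff (Option.some_injective _), ← hE]
      simpa [Set.image_insert_eq] using insert_some_mem_basedOn (G := cycleGraph n) huv huw hvw
  have hfi : Injective f := fun i j hij =>
    Option.some_injective _ <| (hd.eq_iff _ _).1 <| by rw [hf, hij, sub_self, abs_zero]
  set π := Tuple.sort f
  obtain ⟨H, K, hHK⟩ := exists_isHKModel hd hE hf
    ((Tuple.monotone_sort f).strictMono_of_injective (hfi.comp π.injective))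
  refine not_isHKModel hn he ?_ hHK
  have hrange : (π.symm.toEmbedding.trans Fin.valEmbedding) '' Set.univ = Set.Iio n := by
    ext k
    simp only [Set.image_univ, Set.mem_range, Set.mem_Iio]
    exact ⟨fun ⟨i, hi⟩ => hi ▸ Fin.is_lt _, fun hk => ⟨π ⟨k, hk⟩, by simp⟩⟩
  rw [← hrange]
  exact (twoRegularTriangleFreeOn_cycleGraph (by omega)).map _

/-- There are infinitely many minimal non-metric 3-uniform hypergraphs:
for every even `n > 4` there is a minimal non-metric 3-uniform hypergraph
on `n + 1` vertices. -/
theorem stmt_18 :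
    ∀ n : ℕ, Even n → 4 < n →
      ∃ E : Set (Set (Fin (n + 1))),
        (∀ s ∈ E, s.ncard = 3) ∧
        ¬ IsMetricHypergraph E ∧
        ∀ U : Set (Fin (n + 1)), U ≠ Set.univ →
          IsMetricHypergraph (inducedEdges E U) := by
  intro n he hn
  have h6 : 6 ≤ n := by obtain ⟨k, rfl⟩ := he; omega
  let e := finSuccEquiv n
  refine ⟨{s | e '' s ∈ basedOn (cycleGraph n)}, fun s hs => ?_, ?_, fun U hU => ?_⟩
  · rw [← Set.ncard_image_of_injective s e.injective]
    exact ncard_eq_three_of_mem_basedOn hs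
  · rintro ⟨d, hd, hE⟩
    refine not_isMetricHypergraph_basedOn_cycleGraph h6 he
      ⟨_, hd.comp e.symm.injective, Set.ext fun t => ?_⟩
    rw [mem_metricEdges_comp_iff e.symm.injective, ← hE, Set.mem_ofPred_eq, e.image_symm_image]
  · obtain ⟨w, hw⟩ := (Set.ne_univ_iff_exists_notMem U).1 hU
    obtain ⟨d, hd, hagree⟩ := exists_isMetric_agree_basedOn_cycleGraph (by omega) (e w)
    refine isMetricHypergraph_inducedEdges_of_agree (hd.comp e.injective) fun s hs => ?_
    rw [mem_metricEdges_comp_iff e.injective]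
    exact hagree _ fun ⟨x, hx, hxw⟩ => hw (e.injective hxw ▸ hs hx)
end
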